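/- Assume ‖Ẽ(I,u,u)‖ ≤ ε̃ for every unit vector u ∈ ℝ^k. Let θ be a unit vector with coordinates θ_i := ⟨v_i,θ⟩, indexed so that λ̃_1|θ_1| = max_i λ̃_i|θ_i| > 0 and θ_1² < 1; assume 0 ≤ δ(θ) < 1/2 and γ(θ) > 0. Pick any β > α > 0 such that α/((1+α)(1+α²)) ≥ ε̃/(γ(θ)·λ̃_1) and α/(2(1+α)(1+β²)) ≥ ε̃/λ̃_1. Let θ' := T̃(I,θ,θ)/‖T̃(I,θ,θ)‖ (assumed well-defined), and write R := R(θ), R' := R(θ'). Then: (1) if R ≥ 1/α, then R' ≥ 1/α; (2) if 1/β ≤ R < 1/α, then R' ≥ min{R²/(2κ), 1/α}. -/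

import Mathlib

open scoped BigOperators

noncomputable section

/-- Euclidean dot product on `ℝ^k`. -/
def dotp {k : ℕ} (u v : Fin k → ℝ) : ℝ := ∑ i, u i * v i

/-- Euclidean norm on `ℝ^k`. -/
def enorm' {k : ℕ} (u : Fin k → ℝ) : ℝ := Real.sqrt (∑ i, (u i) ^ 2)

/-- Third-order tensors on `ℝ^k`, as `k × k × k` arrays. -/
abbrev Tensor3 (k : ℕ) := Fin k → Fin k → Fin k → ℝ

/-- Symmetry of a third-order tensor (invariance under index permutations). -/
def Symm3 {k : ℕ} (A : Tensor3 k) : Prop :=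
  ∀ a b c, A a b c = A b a c ∧ A a b c = A a c b

/-- Evaluation `A(x,y,z)` of a third-order tensor. -/
def tapp {k : ℕ} (A : Tensor3 k) (x y z : Fin k → ℝ) : ℝ :=
  ∑ a, ∑ b, ∑ c, A a b c * x a * y b * z c

/-- `A(I,u,u)` as a vector. -/
def tvec {k : ℕ} (A : Tensor3 k) (u : Fin k → ℝ) : Fin k → ℝ :=
  fun a => ∑ b, ∑ c, A a b c * u b * u c

/-- `T̃(x,y,z) = ∑ i, λ̃ i ⟨v i, x⟩⟨v i, y⟩⟨v i, z⟩ + Ẽ(x,y,z)`. -/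
def Tapp {k : ℕ} (lam : Fin k → ℝ) (v : Fin k → Fin k → ℝ) (E : Tensor3 k)
    (x y z : Fin k → ℝ) : ℝ :=
  (∑ i, lam i * (dotp (v i) x * (dotp (v i) y * dotp (v i) z))) + tapp E x y z

/-- `T̃(I,u,u)` as a vector. -/
def Tvec {k : ℕ} (lam : Fin k → ℝ) (v : Fin k → Fin k → ℝ) (E : Tensor3 k)
    (u : Fin k → ℝ) : Fin k → ℝ :=
  (∑ i, (lam i * (dotp (v i) u) ^ 2) • v i) + tvec E u

/-- `R(θ) = (θ₁²/(1−θ₁²))^{1/2}` where `θ_i = ⟨v i, θ⟩` and the distinguished (max)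
index is `0`. -/
def Rq {k : ℕ} [NeZero k] (v : Fin k → Fin k → ℝ) (θ : Fin k → ℝ) : ℝ :=
  Real.sqrt ((dotp (v 0) θ) ^ 2 / (1 - (dotp (v 0) θ) ^ 2))

/-- `r_i(θ) = λ̃₁θ₁/(λ̃_i|θ_i|)` with the distinguished (max) index `0`. -/
def rq {k : ℕ} [NeZero k] (lam : Fin k → ℝ) (v : Fin k → Fin k → ℝ)
    (θ : Fin k → ℝ) (i : Fin k) : ℝ :=
  lam 0 * dotp (v 0) θ / (lam i * |dotp (v i) θ|)

/-- `γ(θ) = 1 − 1/min{|r_i(θ)| : i ≠ 0, λ̃_i|θ_i| > 0}` (and `1` if this set is empty). -/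
def gammaq {k : ℕ} [NeZero k] (lam : Fin k → ℝ) (v : Fin k → Fin k → ℝ)
    (θ : Fin k → ℝ) : ℝ :=
  if h : (Finset.univ.filter fun i : Fin k =>
      i ≠ 0 ∧ 0 < lam i * |dotp (v i) θ|).Nonempty then
    1 - ((Finset.univ.filter fun i : Fin k =>
        i ≠ 0 ∧ 0 < lam i * |dotp (v i) θ|).inf' h fun i => |rq lam v θ i|)⁻¹
  else 1

/-- `δ(θ) = ε̃/(λ̃₁θ₁²)` with the distinguished (max) index `0`. -/
def deltaq {k : ℕ} [NeZero k] (lam : Fin k → ℝ) (v : Fin k → Fin k → ℝ) (εt : ℝ)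
    (θ : Fin k → ℝ) : ℝ :=
  εt / (lam 0 * (dotp (v 0) θ) ^ 2)

/-- `κ = λ̃_max/λ̃₁` with the distinguished (max) index `0`. -/
def kappaq {k : ℕ} [NeZero k] (lam : Fin k → ℝ) : ℝ :=
  (Finset.univ.sup' Finset.univ_nonempty lam) / lam 0

/-! In the eigenbasis the coordinates of `T̃(I,θ,θ)` are `λ̃_j θ_j² + e_j` with `‖e‖ ≤ ε̃`, and
`R(θ')²` is the ratio of the squared first coordinate to the squared norm of the others. The first
coordinate is at least `λ̃₁θ₁² − ε̃`; by Minkowski the others have norm at most `L √(1 − θ₁²) + ε̃`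
whenever `λ̃_j |θ_j| ≤ L` for all `j ≠ 1`. Part (1) takes `L = (1 − γ) λ̃₁ |θ₁|`, part (2) takes
`L = λ̃_max √(1 − θ₁²)`; the hypotheses on `α` and `β` then make the first coordinate dominate. -/

open Finset Matrix

lemma sqrt_sum_sq_add_le {ι : Type*} (s : Finset ι) (f g : ι → ℝ) :
    √(∑ i ∈ s, (f i + g i) ^ 2) ≤ √(∑ i ∈ s, f i ^ 2) + √(∑ i ∈ s, g i ^ 2) := by
  have hnorm (x : ι → ℝ) :
      √(∑ i ∈ s, x i ^ 2) = ‖(WithLp.toLp 2 fun i : s => x i : EuclideanSpace ℝ s)‖ := by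
    simp [EuclideanSpace.norm_eq, sum_attach s fun i => x i ^ 2]
  rw [hnorm, hnorm, hnorm]
  exact norm_add_le (WithLp.toLp 2 fun i : s => f i) (WithLp.toLp 2 fun i : s => g i)

lemma one_sub_le_sq_mul_of_inv_le_sqrt_div {s c : ℝ} (hc : 0 < c) (hs : s < 1)
    (h : 1 / c ≤ √(s / (1 - s))) : 1 - s ≤ c ^ 2 * s := by
  rw [Real.le_sqrt' (by positivity), div_pow, one_pow, div_le_div_iff₀ (by positivity)
    (by linarith)] at h
  linarith

lemma min_div_mul_add_le_sub {P Q α ε : ℝ} (hQ : 0 < Q) (hα : 0 < α) (hP : 0 ≤ P)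
    (hε : ε * (2 * (1 + α)) ≤ α * P) :
    min (P / (2 * Q)) (1 / α) * (Q + ε) ≤ P - ε := by
  rcases le_total (P / (2 * Q)) (1 / α) with h | h
  · rw [min_eq_left h, div_mul_eq_mul_div, div_le_iff₀ (by positivity)]
    rw [div_le_div_iff₀ (by positivity) hα] at h
    nlinarith
  · rw [min_eq_right h, div_mul_eq_mul_div, one_mul, div_le_iff₀ hα]
    rw [div_le_div_iff₀ hα (by positivity)] at h
    nlinarith

section

variable {k : ℕ} {lam : Fin k → ℝ} {v : Fin k → Fin k → ℝ} {E : Tensor3 k} {εt : ℝ}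
  {θ : Fin k → ℝ}

lemma dotp_eq_dotProduct (u w : Fin k → ℝ) : dotp u w = u ⬝ᵥ w := rfl

lemma sum_sq_dotp_of_orthonormal
    (horth : ∀ i j, dotp (v i) (v j) = if i = j then 1 else 0) (u : Fin k → ℝ) :
    ∑ j, dotp (v j) u ^ 2 = ∑ i, u i ^ 2 := by
  have hV : (of v)ᵀ * of v = 1 := mul_eq_one_comm.mp <| by
    ext i j
    simpa [mul_apply, one_apply, dotp] using horth i j
  have hsq (w : Fin k → ℝ) : ∑ i, w i ^ 2 = w ⬝ᵥ w := by simp [dotProduct, sq]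
  calc ∑ j, dotp (v j) u ^ 2 = (of v *ᵥ u) ⬝ᵥ (of v *ᵥ u) := hsq _
    _ = u ⬝ᵥ (((of v)ᵀ * of v) *ᵥ u) := by
        rw [← mulVec_mulVec, dotProduct_mulVec, mulVec_transpose, dotProduct_comm]
    _ = ∑ i, u i ^ 2 := by rw [hV, one_mulVec, hsq]

lemma dotp_Tvec (horth : ∀ i j, dotp (v i) (v j) = if i = j then 1 else 0)
    (u : Fin k → ℝ) (j : Fin k) :
    dotp (v j) (Tvec lam v E u) = lam j * dotp (v j) u ^ 2 + dotp (v j) (tvec E u) := by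
  rw [Tvec, dotp_eq_dotProduct, dotProduct_add, dotProduct_sum]
  simp [dotProduct_smul, ← dotp_eq_dotProduct, horth]

lemma sq_enorm' (u : Fin k → ℝ) : enorm' u ^ 2 = ∑ i, u i ^ 2 :=
  Real.sq_sqrt (sum_nonneg fun _ _ => sq_nonneg _)

lemma enorm'_ne_zero {u : Fin k → ℝ} (hu : u ≠ 0) : enorm' u ≠ 0 := by
  rw [enorm', Real.sqrt_ne_zero', lt_iff_le_and_ne]
  refine ⟨sum_nonneg fun _ _ => sq_nonneg _, fun h => hu ?_⟩
  funext i
  simpa using (sum_eq_zero_iff_of_nonneg fun _ _ => sq_nonneg (u _)).mp h.symm i (mem_univ i)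

lemma sq_dotp_zero_add_sum_erase [NeZero k]
    (horth : ∀ i j, dotp (v i) (v j) = if i = j then 1 else 0) (u : Fin k → ℝ) :
    dotp (v 0) u ^ 2 + ∑ j ∈ univ.erase 0, dotp (v j) u ^ 2 = enorm' u ^ 2 := by
  rw [add_sum_erase _ (fun j => dotp (v j) u ^ 2) (mem_univ 0), sum_sq_dotp_of_orthonormal horth,
    sq_enorm']

lemma abs_dotp_le_enorm'
    (horth : ∀ i j, dotp (v i) (v j) = if i = j then 1 else 0) (u : Fin k → ℝ) (j : Fin k) :
    |dotp (v j) u| ≤ enorm' u := by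
  refine Real.abs_le_sqrt ?_
  rw [← sum_sq_dotp_of_orthonormal horth]
  exact single_le_sum (f := fun j => dotp (v j) u ^ 2) (fun _ _ => sq_nonneg _) (mem_univ j)

lemma sq_dotp_normalize_eq_one_or_le_Rq [NeZero k]
    (horth : ∀ i j, dotp (v i) (v j) = if i = j then 1 else 0) {w : Fin k → ℝ} (hw : w ≠ 0)
    {b K : ℝ} (hb : 0 ≤ b) (hK : √(∑ j ∈ univ.erase 0, dotp (v j) w ^ 2) ≤ K)
    (hbK : b * K ≤ dotp (v 0) w) :
    dotp (v 0) ((enorm' w)⁻¹ • w) ^ 2 = 1 ∨ b ≤ Rq v ((enorm' w)⁻¹ • w) := by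
  set N := dotp (v 0) w
  set D := ∑ j ∈ univ.erase 0, dotp (v j) w ^ 2
  have hsplit : N ^ 2 + D = enorm' w ^ 2 := sq_dotp_zero_add_sum_erase horth w
  have hn : enorm' w ^ 2 ≠ 0 := pow_ne_zero 2 (enorm'_ne_zero hw)
  have hcoord : dotp (v 0) ((enorm' w)⁻¹ • w) ^ 2 = N ^ 2 / enorm' w ^ 2 := by
    rw [dotp_eq_dotProduct, dotProduct_smul, smul_eq_mul, mul_pow, inv_pow, ← dotp_eq_dotProduct,
      inv_mul_eq_div]
  obtain hD | hD := (show 0 ≤ D from sum_nonneg fun _ _ => sq_nonneg _).eq_or_lt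
  · left
    rw [hcoord, div_eq_one_iff_eq hn, ← hsplit, ← hD, add_zero]
  · right
    have hR : Rq v ((enorm' w)⁻¹ • w) = √(N ^ 2 / D) := by
      rw [Rq, hcoord, ← hsplit, one_sub_div (hsplit ▸ hn), add_sub_cancel_left,
        div_div_div_cancel_right₀ (hsplit ▸ hn)]
    have hbD : b * √D ≤ N := (mul_le_mul_of_nonneg_left hK hb).trans hbK
    rw [hR, Real.le_sqrt hb (by positivity), le_div_iff₀ hD]
    calc b ^ 2 * D = (b * √D) ^ 2 := by rw [mul_pow, Real.sq_sqrt hD.le]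
      _ ≤ N ^ 2 := pow_le_pow_left₀ (by positivity) hbD 2

lemma gammaq_le_one [NeZero k] : gammaq lam v θ ≤ 1 := by
  unfold gammaq
  split_ifs with h
  · exact sub_le_self _ (inv_nonneg.mpr (le_inf' h _ fun i _ => abs_nonneg _))
  · exact le_rfl

lemma lam_mul_abs_dotp_le_one_sub_gammaq [NeZero k] (hlam : ∀ i, 0 ≤ lam i)
    (hpos : 0 < lam 0 * |dotp (v 0) θ|) {j : Fin k} (hj : j ≠ 0) :
    lam j * |dotp (v j) θ| ≤ (1 - gammaq lam v θ) * (lam 0 * |dotp (v 0) θ|) := by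
  have habs : |lam 0 * dotp (v 0) θ| = lam 0 * |dotp (v 0) θ| := by
    rw [abs_mul, abs_of_nonneg (hlam 0)]
  unfold gammaq
  split_ifs with h
  · rw [sub_sub_cancel]
    set S := univ.filter fun i : Fin k => i ≠ 0 ∧ 0 < lam i * |dotp (v i) θ|
    by_cases hjS : j ∈ S
    · have hBj : 0 < lam j * |dotp (v j) θ| := (mem_filter.mp hjS).2.2
      have hrj : |rq lam v θ j| = lam 0 * |dotp (v 0) θ| / (lam j * |dotp (v j) θ|) := by
        rw [rq, abs_div, habs, abs_of_pos hBj]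
      have hm : 0 < S.inf' h fun i => |rq lam v θ i| := by
        refine (lt_inf'_iff h).mpr fun i hi => ?_
        rw [rq, abs_div, habs, abs_of_pos (mem_filter.mp hi).2.2]
        exact div_pos hpos (mem_filter.mp hi).2.2
      rw [← div_eq_inv_mul, le_div_iff₀ hm, mul_comm, ← le_div_iff₀ hBj, ← hrj]
      exact inf'_le _ hjS
    · have hBj : lam j * |dotp (v j) θ| ≤ 0 := by simpa [S, hj] using hjS
      exact hBj.trans (mul_nonneg (inv_nonneg.mpr (le_inf' h _ fun i _ => abs_nonneg _)) hpos.le)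
  · have hBj : lam j * |dotp (v j) θ| ≤ 0 := by
      simpa [hj] using fun hS : _ => h ⟨j, mem_filter.mpr ⟨mem_univ j, hj, hS⟩⟩
    simpa using hBj

lemma sum_erase_sq_dotp_eq_one_sub [NeZero k]
    (horth : ∀ i j, dotp (v i) (v j) = if i = j then 1 else 0) (hθ : enorm' θ = 1) :
    ∑ j ∈ univ.erase 0, dotp (v j) θ ^ 2 = 1 - dotp (v 0) θ ^ 2 := by
  linarith [sq_dotp_zero_add_sum_erase horth θ, hθ ▸ one_pow 2]

lemma abs_dotp_le_sqrt_one_sub [NeZero k]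
    (horth : ∀ i j, dotp (v i) (v j) = if i = j then 1 else 0) (hθ : enorm' θ = 1)
    {j : Fin k} (hj : j ≠ 0) :
    |dotp (v j) θ| ≤ √(1 - dotp (v 0) θ ^ 2) := by
  refine Real.abs_le_sqrt ?_
  rw [← sum_erase_sq_dotp_eq_one_sub horth hθ]
  exact single_le_sum (f := fun j => dotp (v j) θ ^ 2) (fun _ _ => sq_nonneg _)
    (mem_erase.mpr ⟨hj, mem_univ j⟩)

lemma sub_le_dotp_zero_Tvec [NeZero k]
    (horth : ∀ i j, dotp (v i) (v j) = if i = j then 1 else 0) (hE : enorm' (tvec E θ) ≤ εt) :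
    lam 0 * dotp (v 0) θ ^ 2 - εt ≤ dotp (v 0) (Tvec lam v E θ) := by
  rw [dotp_Tvec horth]
  linarith [neg_abs_le (dotp (v 0) (tvec E θ)), abs_dotp_le_enorm' horth (tvec E θ) 0]

lemma sqrt_sum_erase_sq_dotp_Tvec_le [NeZero k]
    (horth : ∀ i j, dotp (v i) (v j) = if i = j then 1 else 0) (hlam : ∀ i, 0 ≤ lam i)
    (hE : enorm' (tvec E θ) ≤ εt) (hθ : enorm' θ = 1) {L : ℝ} (hL0 : 0 ≤ L)
    (hL : ∀ j ≠ 0, lam j * |dotp (v j) θ| ≤ L) :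
    √(∑ j ∈ univ.erase 0, dotp (v j) (Tvec lam v E θ) ^ 2) ≤
      L * √(1 - dotp (v 0) θ ^ 2) + εt := by
  simp_rw [dotp_Tvec horth]
  refine (sqrt_sum_sq_add_le _ _ _).trans (add_le_add ?_ ?_)
  · rw [← sum_erase_sq_dotp_eq_one_sub horth hθ, ← Real.sqrt_sq hL0,
      ← Real.sqrt_mul (sq_nonneg _), mul_sum]
    refine Real.sqrt_le_sqrt (sum_le_sum fun j hj => ?_)
    calc (lam j * dotp (v j) θ ^ 2) ^ 2 = (lam j * |dotp (v j) θ|) ^ 2 * dotp (v j) θ ^ 2 := by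
          rw [mul_pow, mul_pow, sq_abs]; ring
      _ ≤ L ^ 2 * dotp (v j) θ ^ 2 := by
          gcongr
          · exact mul_nonneg (hlam j) (abs_nonneg _)
          · exact hL j (ne_of_mem_erase hj)
  · refine le_trans ?_ hE
    rw [enorm', ← sum_sq_dotp_of_orthonormal horth]
    exact Real.sqrt_le_sqrt
      (sum_le_sum_of_subset_of_nonneg (erase_subset _ _) fun _ _ _ => sq_nonneg _)

def tensorPowerStep (lam : Fin k → ℝ) (v : Fin k → Fin k → ℝ) (E : Tensor3 k)
    (θ : Fin k → ℝ) : Fin k → ℝ :=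
  (enorm' (Tvec lam v E θ))⁻¹ • Tvec lam v E θ

lemma inv_le_Rq_tensorPowerStep [NeZero k]
    (horth : ∀ i j, dotp (v i) (v j) = if i = j then 1 else 0) (hlam : ∀ i, 0 ≤ lam i)
    (hE : enorm' (tvec E θ) ≤ εt) (hθ : enorm' θ = 1) (hpos : 0 < lam 0 * |dotp (v 0) θ|)
    (hθ1 : dotp (v 0) θ ^ 2 < 1) (hγ : 0 < gammaq lam v θ) {α : ℝ} (hα : 0 < α)
    (h1 : α / ((1 + α) * (1 + α ^ 2)) ≥ εt / (gammaq lam v θ * lam 0))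
    (hne : Tvec lam v E θ ≠ 0) (hR : 1 / α ≤ Rq v θ) :
    dotp (v 0) (tensorPowerStep lam v E θ) ^ 2 = 1 ∨
      1 / α ≤ Rq v (tensorPowerStep lam v E θ) := by
  set t := dotp (v 0) θ
  set γ := gammaq lam v θ
  have hl0 : 0 < lam 0 := pos_of_mul_pos_left hpos (abs_nonneg t)
  have hL : 0 ≤ (1 - γ) * (lam 0 * |t|) := by
    have : γ ≤ 1 := gammaq_le_one
    positivity
  have hs : 1 - t ^ 2 ≤ α ^ 2 * t ^ 2 := one_sub_le_sq_mul_of_inv_le_sqrt_div hα hθ1 hR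
  have hsqrt : √(1 - t ^ 2) ≤ α * |t| := by
    rw [← Real.sqrt_sq (by positivity : 0 ≤ α * |t|), mul_pow, sq_abs]
    exact Real.sqrt_le_sqrt hs
  have hε : εt * (1 + α) ≤ α * γ * lam 0 * t ^ 2 := by
    rw [ge_iff_le, div_le_div_iff₀ (by positivity) (by positivity)] at h1
    nlinarith [mul_pos (mul_pos hα hγ) hl0]
  refine sq_dotp_normalize_eq_one_or_le_Rq horth hne (by positivity)
    (sqrt_sum_erase_sq_dotp_Tvec_le horth hlam hE hθ hL
      fun j hj => lam_mul_abs_dotp_le_one_sub_gammaq hlam hpos hj)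
    ((?_ : _ ≤ lam 0 * t ^ 2 - εt).trans (sub_le_dotp_zero_Tvec horth hE))
  show 1 / α * ((1 - γ) * (lam 0 * |t|) * √(1 - t ^ 2) + εt) ≤ lam 0 * t ^ 2 - εt
  have hK : (1 - γ) * (lam 0 * |t|) * √(1 - t ^ 2) ≤ α * ((1 - γ) * (lam 0 * t ^ 2)) := by
    calc _ ≤ (1 - γ) * (lam 0 * |t|) * (α * |t|) := mul_le_mul_of_nonneg_left hsqrt hL
      _ = α * ((1 - γ) * (lam 0 * t ^ 2)) := by rw [← sq_abs t]; ring
  rw [div_mul_eq_mul_div, one_mul, div_le_iff₀ hα]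
  linarith

lemma min_le_Rq_tensorPowerStep [NeZero k]
    (horth : ∀ i j, dotp (v i) (v j) = if i = j then 1 else 0) (hlam : ∀ i, 0 ≤ lam i)
    (hE : enorm' (tvec E θ) ≤ εt) (hθ : enorm' θ = 1) (hpos : 0 < lam 0 * |dotp (v 0) θ|)
    (hθ1 : dotp (v 0) θ ^ 2 < 1) {α β : ℝ} (hα : 0 < α) (hαβ : α < β)
    (h2 : α / (2 * (1 + α) * (1 + β ^ 2)) ≥ εt / lam 0)
    (hne : Tvec lam v E θ ≠ 0) (hR : 1 / β ≤ Rq v θ) :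
    dotp (v 0) (tensorPowerStep lam v E θ) ^ 2 = 1 ∨
      min (Rq v θ ^ 2 / (2 * kappaq lam)) (1 / α) ≤ Rq v (tensorPowerStep lam v E θ) := by
  set t := dotp (v 0) θ
  set lmax := univ.sup' univ_nonempty lam
  have hl0 : 0 < lam 0 := pos_of_mul_pos_left hpos (abs_nonneg t)
  have hlmax : lam 0 ≤ lmax := le_sup' lam (mem_univ 0)
  have hlmax0 : 0 < lmax := hl0.trans_le hlmax
  have h1t : 0 < 1 - t ^ 2 := by linarith
  have hs : 1 - t ^ 2 ≤ β ^ 2 * t ^ 2 :=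
    one_sub_le_sq_mul_of_inv_le_sqrt_div (hα.trans hαβ) hθ1 hR
  have hε : εt * (2 * (1 + α)) ≤ α * (lam 0 * t ^ 2) := by
    rw [ge_iff_le, div_le_div_iff₀ hl0 (by positivity)] at h2
    nlinarith [mul_pos hα hl0]
  have hK := sqrt_sum_erase_sq_dotp_Tvec_le horth hlam hE hθ (L := lmax * √(1 - t ^ 2))
    (by positivity) fun j hj => mul_le_mul (le_sup' lam (mem_univ j))
      (abs_dotp_le_sqrt_one_sub horth hθ hj) (abs_nonneg _) hlmax0.le
  rw [mul_assoc, Real.mul_self_sqrt h1t.le] at hK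
  have hRκ : Rq v θ ^ 2 / (2 * kappaq lam) = lam 0 * t ^ 2 / (2 * (lmax * (1 - t ^ 2))) := by
    rw [Rq, Real.sq_sqrt (div_nonneg (sq_nonneg t) h1t.le),
      show kappaq lam = lmax / lam 0 from rfl]
    field_simp
  rw [hRκ]
  exact sq_dotp_normalize_eq_one_or_le_Rq horth hne (by positivity) hK
    ((min_div_mul_add_le_sub (by positivity) hα (by positivity) hε).trans
      (sub_le_dotp_zero_Tvec horth hE))

end

theorem stmt15_general {k : ℕ} [NeZero k]
    (lam : Fin k → ℝ) (hlam : ∀ i, 0 ≤ lam i)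
    (v : Fin k → Fin k → ℝ)
    (horth : ∀ i j, dotp (v i) (v j) = if i = j then 1 else 0)
    (E : Tensor3 k)
    (εt : ℝ)
    (hEnorm : ∀ u : Fin k → ℝ, enorm' u = 1 → enorm' (tvec E u) ≤ εt)
    (θ : Fin k → ℝ) (hθ : enorm' θ = 1)
    (hposθ : 0 < lam 0 * |dotp (v 0) θ|)
    (hθ1 : (dotp (v 0) θ) ^ 2 < 1)
    (hγ : 0 < gammaq lam v θ)
    (α β : ℝ) (hα : 0 < α) (hαβ : α < β)
    (h1 : α / ((1 + α) * (1 + α ^ 2)) ≥ εt / (gammaq lam v θ * lam 0))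
    (h2 : α / (2 * (1 + α) * (1 + β ^ 2)) ≥ εt / lam 0)
    (hne : Tvec lam v E θ ≠ 0)
    (θ' : Fin k → ℝ) (hθ' : θ' = (enorm' (Tvec lam v E θ))⁻¹ • Tvec lam v E θ) :
    (Rq v θ ≥ 1 / α →
      (dotp (v 0) θ') ^ 2 = 1 ∨ Rq v θ' ≥ 1 / α) ∧
    (1 / β ≤ Rq v θ → Rq v θ < 1 / α →
      (dotp (v 0) θ') ^ 2 = 1 ∨
        Rq v θ' ≥ min ((Rq v θ) ^ 2 / (2 * kappaq lam)) (1 / α)) := by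
  obtain rfl : θ' = tensorPowerStep lam v E θ := hθ'
  have hE := hEnorm θ hθ
  exact ⟨fun hR => inv_le_Rq_tensorPowerStep horth hlam hE hθ hposθ hθ1 hγ hα h1 hne hR,
    fun hR _ => min_le_Rq_tensorPowerStep horth hlam hE hθ hposθ hθ1 hα hαβ h2 hne hR⟩

/-- **Growth of `R` in the quadratic convergence regime (Lemma on `R`).**
Assume `0 ≤ δ(θ) < 1/2`, `γ(θ) > 0`, and `β > α > 0` with
`α/((1+α)(1+α²)) ≥ ε̃/(γ(θ)λ̃₁)` and `α/(2(1+α)(1+β²)) ≥ ε̃/λ̃₁`.  Then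
(1) if `R(θ) ≥ 1/α` then `R(θ') ≥ 1/α`;
(2) if `1/β ≤ R(θ) < 1/α` then `R(θ') ≥ min{R(θ)²/(2κ), 1/α}`.
(`R(θ') = +∞`, i.e. `θ'₁² = 1`, is covered by the first disjuncts.) -/
theorem stmt15 {k : ℕ} [NeZero k]
    (lam : Fin k → ℝ) (hlam : ∀ i, 0 ≤ lam i)
    (v : Fin k → Fin k → ℝ)
    (horth : ∀ i j, dotp (v i) (v j) = if i = j then 1 else 0)
    (E : Tensor3 k) (hE : Symm3 E)
    (εt : ℝ)
    (hEnorm : ∀ u : Fin k → ℝ, enorm' u = 1 → enorm' (tvec E u) ≤ εt)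
    (θ : Fin k → ℝ) (hθ : enorm' θ = 1)
    (hmaxθ : ∀ i, lam i * |dotp (v i) θ| ≤ lam 0 * |dotp (v 0) θ|)
    (hposθ : 0 < lam 0 * |dotp (v 0) θ|)
    (hθ1 : (dotp (v 0) θ) ^ 2 < 1)
    (hδ0 : 0 ≤ deltaq lam v εt θ) (hδ : deltaq lam v εt θ < 1 / 2)
    (hγ : 0 < gammaq lam v θ)
    (α β : ℝ) (hα : 0 < α) (hαβ : α < β)
    (h1 : α / ((1 + α) * (1 + α ^ 2)) ≥ εt / (gammaq lam v θ * lam 0))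
    (h2 : α / (2 * (1 + α) * (1 + β ^ 2)) ≥ εt / lam 0)
    (hne : Tvec lam v E θ ≠ 0)
    (θ' : Fin k → ℝ) (hθ' : θ' = (enorm' (Tvec lam v E θ))⁻¹ • Tvec lam v E θ) :
    (Rq v θ ≥ 1 / α →
      (dotp (v 0) θ') ^ 2 = 1 ∨ Rq v θ' ≥ 1 / α) ∧
    (1 / β ≤ Rq v θ → Rq v θ < 1 / α →
      (dotp (v 0) θ') ^ 2 = 1 ∨
        Rq v θ' ≥ min ((Rq v θ) ^ 2 / (2 * kappaq lam)) (1 / α)) :=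
  stmt15_general lam hlam v horth E εt hEnorm θ hθ hposθ hθ1 hγ α β hα hαβ h1 h2 hne θ' hθ'

end
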